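/- Let A be a Hopf algebra over k with bijective antipode S, and let θ_ij, χ_i : A → k (i,j = 1,…,n) be k-linear maps satisfying θ_ij(ab) = Σ_k θ_ik(a)θ_kj(b), θ_ij(1) = δ_ij, and χ_i(ab) = Σ_j χ_j(a)θ_ji(b) + ε(a)χ_i(b) for all a, b ∈ A. Then the data ∂_i(a) = χ_i ⊳ a, σ_ij(a) = θ_ij ⊳ a, σ̄_ij(a) = (θ_ji ∘ S⁻¹) ⊳ a, σ̂_ij(a) = (θ_ij ∘ S⁻²) ⊳ a, where f ⊳ a = (id ⊗ f)(Δ(a)), define a free right twisted multi-derivation (∂, σ; σ̄, σ̂) on A. -/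

import Mathlib

/-!
The action `f ↦ (f ⊳ ·)` is a ring homomorphism from the convolution algebra of functionals
`A → k` to `End_k A`, and it turns a product rule `f (xy) = Σ_l g_l(x) h_l(y)` into
`f ⊳ ab = Σ_l (g_l ⊳ a)(h_l ⊳ b)`. Hence `σ` and `∂` inherit their algebra-map and twisted
Leibniz properties from those of `θ` and `χ`; and since `S⁻¹` is anti-multiplicative, the
matrices `θ̄_ij = θ_ji ∘ S⁻¹` and `θ̂_ij = θ̄_ji ∘ S⁻¹ = θ_ij ∘ S⁻²` are multiplicative as well.
Freeness reduces to the convolution identities `θ̄ ⋆ θᵀ = θᵀ ⋆ θ̄ = 1` (and the same for `θ̄`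
in place of `θ`), which follow from `Σ a₂ S⁻¹(a₁) = ε(a) 1 = Σ S⁻¹(a₂) a₁`.
-/

open TensorProduct

namespace Stmt14

variable {k A : Type*} [Field k] [Ring A] [HopfAlgebra k A] {n : ℕ}

/-- The left action `f ⊳ a = (id ⊗ f)(Δ a)` of a functional `f : A → k` on `A`. -/
noncomputable def hit (f : A →ₗ[k] k) : A →ₗ[k] A :=
  (TensorProduct.rid k A).toLinearMap ∘ₗ (LinearMap.lTensor A f) ∘ₗ Coalgebra.comul

open Coalgebra HopfAlgebra WithConv

section InverseAntipode

variable {R H ι : Type*} [CommSemiring R] [Semiring H] [HopfAlgebra R H] {S' : H →ₗ[R] H}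

theorem map_one_of_leftInverse_antipode (hS'l : ∀ a, S' (antipode R a) = a) : S' 1 = 1 := by
  simpa [antipode_one] using hS'l 1

theorem map_mul_antidistrib_of_inverse_antipode (hS'l : ∀ a, S' (antipode R a) = a)
    (hS'r : ∀ a, antipode R (S' a) = a) (a b : H) : S' (a * b) = S' b * S' a := by
  rw [← hS'l (S' b * S' a), antipode_mul_antidistrib, hS'r, hS'r]

theorem sum_right_mul_map_left_eq_smul (hS'l : ∀ a, S' (antipode R a) = a)
    (hS'r : ∀ a, antipode R (S' a) = a) {a : H} (r : Repr R a ι) :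
    ∑ m ∈ r.index, r.right m * S' (r.left m) = counit (R := R) a • (1 : H) := by
  apply Function.LeftInverse.injective hS'l
  simp only [map_sum, map_smul, antipode_mul_antidistrib, hS'r, antipode_one,
    sum_mul_antipode_eq_smul]

theorem sum_map_right_mul_left_eq_smul (hS'l : ∀ a, S' (antipode R a) = a)
    (hS'r : ∀ a, antipode R (S' a) = a) {a : H} (r : Repr R a ι) :
    ∑ m ∈ r.index, S' (r.right m) * r.left m = counit (R := R) a • (1 : H) := by
  apply Function.LeftInverse.injective hS'l
  simp only [map_sum, map_smul, antipode_mul_antidistrib, hS'r, antipode_one,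
    sum_antipode_mul_eq_smul]

end InverseAntipode

theorem hit_apply (f : A →ₗ[k] k) {a : A} {ι : Type*} (r : Repr k a ι) :
    hit f a = ∑ i ∈ r.index, f (r.right i) • r.left i := by
  simp [hit, ← r.eq]

theorem hit_one (f : A →ₗ[k] k) : hit f (1 : A) = f 1 • 1 := by
  simp [hit, Algebra.TensorProduct.one_def]

theorem hit_counit : hit (counit (R := k) (A := A)) = LinearMap.id := by
  ext a
  simp [hit]

theorem hit_hit (f g : A →ₗ[k] k) (a : A) :
    hit f (hit g a) = hit (toConv f * toConv g).ofConv a := by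
  let r := ℛ k a
  have coassoc := congr(((TensorProduct.rid k A).toLinearMap ∘ₗ
    (LinearMap.mul' k k ∘ₗ TensorProduct.map f g).lTensor A)
    $(sum_tmul_tmul_eq r (fun i => ℛ k (r.left i)) (fun i => ℛ k (r.right i))))
  simp only [map_sum, LinearMap.comp_apply, LinearMap.lTensor_tmul, map_tmul,
    LinearMap.mul'_apply, LinearEquiv.coe_coe, rid_tmul] at coassoc
  simp only [hit_apply _ r, map_sum, map_smul, hit_apply _ (ℛ k (r.left _)),
    (ℛ k (r.right _)).convMul_apply, Finset.smul_sum, smul_smul, Finset.sum_smul]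
  simpa only [mul_comm (g _)] using coassoc

variable (k A) in
@[simps]
noncomputable def hitRingHom : WithConv (A →ₗ[k] k) →+* Module.End k A where
  toFun f := hit f.ofConv
  map_one' := hit_counit
  map_mul' f g := LinearMap.ext fun a => (hit_hit f.ofConv g.ofConv a).symm
  map_zero' := by ext; simp [hit]
  map_add' f g := by ext; simp [hit, LinearMap.lTensor_add]

theorem sum_hit_hit_of_mul_eq_one {ι : Type*} [Fintype ι] [DecidableEq ι]
    {P Q : Matrix ι ι (WithConv (A →ₗ[k] k))} (h : P * Q = 1) (i j : ι) (a : A) :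
    ∑ l, hit (P i l).ofConv (hit (Q l j).ofConv a) = if i = j then a else 0 := by
  have := congr((hitRingHom k A).mapMatrix $h i j a)
  rw [map_mul, map_one, Matrix.mul_apply, Matrix.one_apply] at this
  simpa [LinearMap.sum_apply, apply_ite (fun f : Module.End k A => f a)] using this

theorem hit_mul_of_map_mul {ι : Type*} [Fintype ι] {f : A →ₗ[k] k} {g h : ι → A →ₗ[k] k}
    (hf : ∀ x y, f (x * y) = ∑ l, g l x * h l y) (a b : A) :
    hit f (a * b) = ∑ l, hit (g l) a * hit (h l) b := by
  simp only [hit_apply _ ((ℛ k a).mul (ℛ k b)), hit_apply _ (ℛ k a), hit_apply _ (ℛ k b),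
    Repr.mul_left, Repr.mul_right, Repr.mul_index, Finset.sum_product, hf, Finset.sum_smul,
    Finset.sum_mul_sum, smul_mul_smul_comm]
  conv_rhs => rw [Finset.sum_comm]
  exact Finset.sum_congr rfl fun _ _ => Finset.sum_comm

theorem hit_mul_of_leibniz {ι : Type*} [Fintype ι] {f : A →ₗ[k] k} {g h : ι → A →ₗ[k] k}
    (hf : ∀ x y, f (x * y) = (∑ l, g l x * h l y) + counit x * f y) (a b : A) :
    hit f (a * b) = (∑ l, hit (g l) a * hit (h l) b) + a * hit f b := by
  have := hit_mul_of_map_mul (g := fun o : Option ι => o.elim counit g)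
    (h := fun o : Option ι => o.elim f h)
    (fun x y => by rw [Fintype.sum_option, hf, add_comm]; rfl) a b
  rwa [Fintype.sum_option, add_comm, Option.elim_none, hit_counit] at this

section MultiplicativeMatrix

variable {R H B ι : Type*} [CommSemiring R] [Fintype ι] [DecidableEq ι]

structure IsMultiplicativeMatrix [Semiring H] [Module R H] [Semiring B] [Module R B]
    (F : ι → ι → H →ₗ[R] B) : Prop where
  map_one : ∀ i j, F i j 1 = if i = j then 1 else 0
  map_mul : ∀ i j a b, F i j (a * b) = ∑ l, F i l a * F l j b

namespace IsMultiplicativeMatrix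

noncomputable def algHom [Semiring H] [Algebra R H] [Semiring B] [Algebra R B]
    {F : ι → ι → H →ₗ[R] B} (hF : IsMultiplicativeMatrix F) : H →ₐ[R] Matrix ι ι B :=
  AlgHom.ofLinearMap (LinearMap.pi fun i => LinearMap.pi fun j => F i j)
    (by ext i j; rw [Matrix.one_apply]; exact hF.map_one i j)
    (fun a b => by ext i j; rw [Matrix.mul_apply]; exact hF.map_mul i j a b)

theorem transpose_comp [Semiring H] [Module R H] [CommSemiring B] [Module R B]
    {F : ι → ι → H →ₗ[R] B} (hF : IsMultiplicativeMatrix F) {S' : H →ₗ[R] H}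
    (hS'one : S' 1 = 1) (hS'mul : ∀ a b, S' (a * b) = S' b * S' a) :
    IsMultiplicativeMatrix fun i j => F j i ∘ₗ S' where
  map_one i j := by simp [hS'one, hF.map_one, eq_comm]
  map_mul i j a b := by simp [hS'mul, hF.map_mul, mul_comm]

variable [Semiring H] [HopfAlgebra R H] {θ : ι → ι → H →ₗ[R] R} {S' : H →ₗ[R] H}

theorem transpose_comp_mul_transpose (hθ : IsMultiplicativeMatrix θ)
    (hS'l : ∀ a, S' (antipode R a) = a) (hS'r : ∀ a, antipode R (S' a) = a) :
    (Matrix.of fun i j => toConv (θ j i ∘ₗ S')) * (Matrix.of fun i j => toConv (θ j i)) = 1 := by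
  ext i j x
  let r := ℛ R x
  calc _ = ∑ l, ∑ m ∈ r.index, θ l i (S' (r.left m)) * θ j l (r.right m) := by
        simp [Matrix.mul_apply, r.convMul_apply]
    _ = θ j i (∑ m ∈ r.index, r.right m * S' (r.left m)) := by
        simp only [map_sum, hθ.map_mul]
        rw [Finset.sum_comm]
        simp only [mul_comm]
    _ = _ := by
        rw [sum_right_mul_map_left_eq_smul hS'l hS'r, map_smul, hθ.map_one]
        by_cases hij : i = j <;> simp [hij, Matrix.one_apply, Ne.symm]

theorem transpose_mul_transpose_comp (hθ : IsMultiplicativeMatrix θ)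
    (hS'l : ∀ a, S' (antipode R a) = a) (hS'r : ∀ a, antipode R (S' a) = a) :
    (Matrix.of fun i j => toConv (θ j i)) * (Matrix.of fun i j => toConv (θ j i ∘ₗ S')) = 1 := by
  ext i j x
  let r := ℛ R x
  calc _ = ∑ l, ∑ m ∈ r.index, θ l i (r.left m) * θ j l (S' (r.right m)) := by
        simp [Matrix.mul_apply, r.convMul_apply]
    _ = θ j i (∑ m ∈ r.index, S' (r.right m) * r.left m) := by
        simp only [map_sum, hθ.map_mul]
        rw [Finset.sum_comm]
        simp only [mul_comm]
    _ = _ := by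
        rw [sum_map_right_mul_left_eq_smul hS'l hS'r, map_smul, hθ.map_one]
        by_cases hij : i = j <;> simp [hij, Matrix.one_apply, Ne.symm]

end IsMultiplicativeMatrix

end MultiplicativeMatrix

theorem IsMultiplicativeMatrix.hit {ι : Type*} [Fintype ι] [DecidableEq ι]
    {θ : ι → ι → A →ₗ[k] k} (hθ : IsMultiplicativeMatrix θ) :
    IsMultiplicativeMatrix fun i j => hit (θ i j) where
  map_one i j := by rw [hit_one, hθ.map_one, ite_smul, one_smul, zero_smul]
  map_mul i j := hit_mul_of_map_mul (hθ.map_mul i j)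

/--
Given Hopf-algebraic data `(θ_ij, χ_i)` as above, the maps
`∂_i = χ_i ⊳ -`, `σ_ij = θ_ij ⊳ -`, `σ̄_ij = (θ_ji ∘ S⁻¹) ⊳ -` and
`σ̂_ij = (θ_ij ∘ S⁻²) ⊳ -` constitute a free right twisted multi-derivation on
`A`: `σ`, `σ̄`, `σ̂` are algebra maps `A → M_n(A)`, `∂` satisfies the twisted
Leibniz rule, and `σ̄ • σᵀ = σᵀ • σ̄ = 𝕀`, `σ̂ • σ̄ᵀ = σ̄ᵀ • σ̂ = 𝕀`.
-/
theorem free_twisted_multiderivation_of_hopf_data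
    (S' : A →ₗ[k] A)
    (hS'l : ∀ a, S' (HopfAlgebra.antipode (R := k) a) = a)
    (hS'r : ∀ a, HopfAlgebra.antipode (R := k) (S' a) = a)
    (θ : Fin n → Fin n → (A →ₗ[k] k)) (χ : Fin n → (A →ₗ[k] k))
    (hθmul : ∀ (i j : Fin n) (a b : A),
      θ i j (a * b) = ∑ l, θ i l a * θ l j b)
    (hθone : ∀ i j : Fin n, θ i j 1 = if i = j then (1 : k) else 0)
    (hχ : ∀ (i : Fin n) (a b : A),
      χ i (a * b) = (∑ j, χ j a * θ j i b) + Coalgebra.counit a * χ i b) :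
    -- the twisted Leibniz rule for `∂_i(a) = χ_i ⊳ a`:
    (∀ (i : Fin n) (a b : A),
      hit (χ i) (a * b)
        = (∑ j, hit (χ j) a * hit (θ j i) b) + a * hit (χ i) b) ∧
    -- `σ`, `σ̄` and `σ̂` are algebra maps `A → M_n(A)`:
    (∃ σA σbarA σhatA : A →ₐ[k] Matrix (Fin n) (Fin n) A,
      (∀ (a : A) (i j : Fin n), σA a i j = hit (θ i j) a) ∧
      (∀ (a : A) (i j : Fin n), σbarA a i j = hit ((θ j i) ∘ₗ S') a) ∧
      (∀ (a : A) (i j : Fin n), σhatA a i j = hit ((θ i j) ∘ₗ S' ∘ₗ S') a)) ∧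
    -- `σ̄ • σᵀ = 𝕀` and `σᵀ • σ̄ = 𝕀`:
    (∀ (i j : Fin n) (a : A),
      (∑ l, hit ((θ l i) ∘ₗ S') (hit (θ j l) a)) = if i = j then a else 0) ∧
    (∀ (i j : Fin n) (a : A),
      (∑ l, hit (θ l i) (hit ((θ j l) ∘ₗ S') a)) = if i = j then a else 0) ∧
    -- `σ̂ • σ̄ᵀ = 𝕀` and `σ̄ᵀ • σ̂ = 𝕀`:
    (∀ (i j : Fin n) (a : A),
      (∑ l, hit ((θ i l) ∘ₗ S' ∘ₗ S') (hit ((θ l j) ∘ₗ S') a))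
        = if i = j then a else 0) ∧
    (∀ (i j : Fin n) (a : A),
      (∑ l, hit ((θ i l) ∘ₗ S') (hit ((θ l j) ∘ₗ S' ∘ₗ S') a))
        = if i = j then a else 0) := by
  have hθ : IsMultiplicativeMatrix θ := ⟨hθone, hθmul⟩
  have hS'one := map_one_of_leftInverse_antipode hS'l
  have hS'mul := map_mul_antidistrib_of_inverse_antipode hS'l hS'r
  have hθbar := hθ.transpose_comp hS'one hS'mul
  have hθhat := hθbar.transpose_comp hS'one hS'mul
  exact ⟨fun i => hit_mul_of_leibniz (hχ i),
    ⟨hθ.hit.algHom, hθbar.hit.algHom, hθhat.hit.algHom,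
      fun _ _ _ => rfl, fun _ _ _ => rfl, fun _ _ _ => rfl⟩,
    sum_hit_hit_of_mul_eq_one (hθ.transpose_comp_mul_transpose hS'l hS'r),
    sum_hit_hit_of_mul_eq_one (hθ.transpose_mul_transpose_comp hS'l hS'r),
    sum_hit_hit_of_mul_eq_one (hθbar.transpose_comp_mul_transpose hS'l hS'r),
    sum_hit_hit_of_mul_eq_one (hθbar.transpose_mul_transpose_comp hS'l hS'r)⟩

end Stmt14
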